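/- (Entry of the Gr(3,7) twist table: T*(X^{134567}) = Δ₁₂₇Δ₅₆₇·Y^{123456}.) For all vectors v₁,…,v₇ ∈ ℝ³, set w_i := v_{i+1}×v_{i+2} with indices taken modulo 7 in {1,…,7}, and write Δ_{abc} := det(v_a,v_b,v_c). Then det(w₁×w₃, w₄×w₅, w₆×w₇) = Δ₁₂₇·Δ₅₆₇·det(v₆×v₁, v₂×v₃, v₄×v₅). -/

import Mathlib

/-- Determinant of the 3×3 real matrix with columns `a`, `b`, `c`. -/
noncomputable def det3 (a b c : Fin 3 → ℝ) : ℝ :=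
  (Matrix.of ![a, b, c]).transpose.det

/-- The standard cross product on `ℝ³`. -/
def cross (a b : Fin 3 → ℝ) : Fin 3 → ℝ := crossProduct a b

/-!
Two of the three cross products of the twisted columns share a vector:
`w₄ × w₅ = (v₅ × v₆) × (v₆ × v₇) = Δ₅₆₇ v₆` and `w₆ × w₇ = Δ₇₁₂ v₁`.
Pulling out these scalars leaves `det((v₂ × v₃) × (v₄ × v₅), v₆, v₁)`, and since
`det(a × b, c, d) = (a × b) ⬝ (c × d)` is symmetric in the pairs `(a, b)`, `(c, d)`,
this equals `det(v₆ × v₁, v₂ × v₃, v₄ × v₅)`.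
-/

open Matrix

theorem det3_eq_dotProduct_cross (a b c : Fin 3 → ℝ) : det3 a b c = a ⬝ᵥ cross b c := by
  rw [det3, det_transpose, cross, triple_product_eq_det]
  rfl

theorem det3_rotate (a b c : Fin 3 → ℝ) : det3 a b c = det3 c a b := by
  simp only [det3_eq_dotProduct_cross, cross, triple_product_permutation c a b]

theorem det3_smul_smul (a b c : Fin 3 → ℝ) (s t : ℝ) :
    det3 a (s • b) (t • c) = s * t * det3 a b c := by
  simp only [det3_eq_dotProduct_cross, cross, LinearMap.map_smul, LinearMap.smul_apply,
    dotProduct_smul, smul_eq_mul]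
  ring

theorem det3_cross_comm (a b c d : Fin 3 → ℝ) :
    det3 (cross a b) c d = det3 (cross c d) a b := by
  rw [det3_eq_dotProduct_cross, det3_eq_dotProduct_cross, dotProduct_comm]

theorem cross_cross_cross_of_shared (a b c : Fin 3 → ℝ) :
    cross (cross a b) (cross b c) = det3 a b c • b := by
  rw [cross, cross, cross, cross_cross_eq_smul_sub_smul, dot_self_cross, zero_smul, sub_zero,
    det3_eq_dotProduct_cross, cross]

theorem twist_X134567_general (v₁ v₂ v₃ v₄ v₅ v₆ v₇ w₁ w₃ w₄ w₅ w₆ w₇ : Fin 3 → ℝ)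
    (hw₁ : w₁ = cross v₂ v₃) (hw₃ : w₃ = cross v₄ v₅)
    (hw₄ : w₄ = cross v₅ v₆) (hw₅ : w₅ = cross v₆ v₇) (hw₆ : w₆ = cross v₇ v₁)
    (hw₇ : w₇ = cross v₁ v₂) :
    det3 (cross w₁ w₃) (cross w₄ w₅) (cross w₆ w₇)
      = det3 v₁ v₂ v₇ * det3 v₅ v₆ v₇
          * det3 (cross v₆ v₁) (cross v₂ v₃) (cross v₄ v₅) := by
  subst hw₁ hw₃ hw₄ hw₅ hw₆ hw₇
  rw [cross_cross_cross_of_shared v₅ v₆ v₇, cross_cross_cross_of_shared v₇ v₁ v₂, det3_smul_smul,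
    det3_cross_comm, det3_rotate v₁ v₂ v₇]
  ring

/-- Gr(3,7) twist table entry: `T*(X^{134567}) = Δ₁₂₇Δ₅₆₇ · Y^{123456}`. -/
theorem twist_X134567 (v₁ v₂ v₃ v₄ v₅ v₆ v₇ w₁ w₂ w₃ w₄ w₅ w₆ w₇ : Fin 3 → ℝ)
    (hw₁ : w₁ = cross v₂ v₃) (hw₂ : w₂ = cross v₃ v₄) (hw₃ : w₃ = cross v₄ v₅)
    (hw₄ : w₄ = cross v₅ v₆) (hw₅ : w₅ = cross v₆ v₇) (hw₆ : w₆ = cross v₇ v₁)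
    (hw₇ : w₇ = cross v₁ v₂) :
    det3 (cross w₁ w₃) (cross w₄ w₅) (cross w₆ w₇)
      = det3 v₁ v₂ v₇ * det3 v₅ v₆ v₇
          * det3 (cross v₆ v₁) (cross v₂ v₃) (cross v₄ v₅) :=
  twist_X134567_general v₁ v₂ v₃ v₄ v₅ v₆ v₇ w₁ w₃ w₄ w₅ w₆ w₇ hw₁ hw₃ hw₄ hw₅ hw₆ hw₇
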